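/- arXiv:1702.08238 — 6 statements merged into one kernel-verified Lean document; each statement's English description precedes it below -/
import Mathlib

section
/- Let V be partitioned into k color classes V_1,...,V_k each of size n, with n ≥ 2, and for i ∈ Fin n define the string 𝒱_i of length k+1 by 𝒱_i 0 = $ and 𝒱_i (h+1) = v_{h,i} (the i-th vertex of color h), where $, and all vertices, are distinct alphabet symbols. Then a string S of length k+1 minimizes ∑_{i<n} Ham(S, 𝒱_i) if and only if S 0 = $ and for each h < k there exists i_h < n with S (h+1) = v_{h,i_h}; moreover the minimum total distance is (n−1)·k. -/
/-- Hamming distance between two strings of length `n`. -/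
def ham {n : ℕ} {α : Type*} [DecidableEq α] (S T : Fin n → α) : ℕ :=
  (Finset.univ.filter fun i => S i ≠ T i).card

/-- The vertex string `𝒱_i = $ v_{1,i} … v_{k,i}`. -/
def Vstr {k n : ℕ} {α : Type*} (dollar : α) (v : Fin k → Fin n → α) (i : Fin n) :
    Fin (k+1) → α := Fin.cons dollar fun h => v h i

lemma total_eq {k n : ℕ} {α : Type*} [DecidableEq α]
    (dollar : α) (v : Fin k → Fin n → α)
    (hv : Function.Injective fun q : Fin k × Fin n => v q.1 q.2)
    (S : Fin (k+1) → α) :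
    ∑ i, ham S (Vstr dollar v i)
      = (if S 0 = dollar then 0 else n)
        + ∑ h : Fin k, (if ∃ i, S h.succ = v h i then n - 1 else n) := by
  have hinj : ∀ h : Fin k, Function.Injective (v h) := by
    intro h a b hab
    have := hv (a₁ := (h, a)) (a₂ := (h, b)) hab
    exact (Prod.ext_iff.mp this).2
  have hham : ∀ i, ham S (Vstr dollar v i)
      = ∑ p, if S p ≠ Vstr dollar v i p then 1 else 0 := by
    intro i; exact Finset.card_filter _ _
  rw [Finset.sum_congr rfl fun i _ => hham i, Finset.sum_comm]
  rw [Fin.sum_univ_succ]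
  congr 1
  · simp only [Vstr, Fin.cons_zero]
    by_cases h : S 0 = dollar <;> simp [h]
  · refine Finset.sum_congr rfl fun h _ => ?_
    simp only [Vstr, Fin.cons_succ]
    have hcard : (Finset.univ.filter fun i => S h.succ ≠ v h i).card
        = if ∃ i, S h.succ = v h i then n - 1 else n := by
      split_ifs with hex
      · obtain ⟨i₀, hi₀⟩ := hex
        have : (Finset.univ.filter fun i => S h.succ ≠ v h i) = Finset.univ \ {i₀} := by
          ext i
          simp only [Finset.mem_filter, Finset.mem_univ, true_and, Finset.mem_sdiff,
            Finset.mem_singleton]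
          constructor
          · intro hne hi; exact hne (hi ▸ hi₀)
          · intro hne he; exact hne (hinj h (hi₀ ▸ he.symm))
        rw [this, Finset.card_sdiff_of_subset (by simp)]
        simp
      · push_neg at hex
        have : (Finset.univ.filter fun i => S h.succ ≠ v h i) = Finset.univ := by
          ext i; simp [hex i]
        rw [this]; simp
    rw [← hcard, Finset.card_filter]

theorem stmt3 {k n : ℕ} {α : Type*} [DecidableEq α] (hn : 2 ≤ n)
    (dollar : α) (v : Fin k → Fin n → α)
    (hv : Function.Injective fun q : Fin k × Fin n => v q.1 q.2)
    (hvd : ∀ h i, v h i ≠ dollar)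
    (S : Fin (k+1) → α) :
    ((∀ S' : Fin (k+1) → α,
        ∑ i, ham S (Vstr dollar v i) ≤ ∑ i, ham S' (Vstr dollar v i)) ↔
      (S 0 = dollar ∧ ∀ h : Fin k, ∃ i : Fin n, S h.succ = v h i)) ∧
    ((S 0 = dollar ∧ ∀ h : Fin k, ∃ i : Fin n, S h.succ = v h i) →
      ∑ i, ham S (Vstr dollar v i) = (n - 1) * k) := by
  have hmin : ∀ T : Fin (k+1) → α,
      (T 0 = dollar ∧ ∀ h : Fin k, ∃ i : Fin n, T h.succ = v h i) →
      ∑ i, ham T (Vstr dollar v i) = (n - 1) * k := by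
    intro T ⟨h0, hh⟩
    rw [total_eq dollar v hv T, if_pos h0]
    have : ∀ h : Fin k, (if ∃ i, T h.succ = v h i then n - 1 else n) = n - 1 := by
      intro h; rw [if_pos (hh h)]
    rw [Finset.sum_congr rfl fun h _ => this h]
    simp [mul_comm]
  refine ⟨?_, hmin S⟩
  have i₀ : Fin n := ⟨0, by omega⟩
  set S₀ : Fin (k+1) → α := Vstr dollar v i₀ with hS₀
  have hS₀cond : S₀ 0 = dollar ∧ ∀ h : Fin k, ∃ i : Fin n, S₀ h.succ = v h i := by
    constructor
    · simp [hS₀, Vstr]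
    · intro h; exact ⟨i₀, by simp [hS₀, Vstr]⟩
  have hS₀val := hmin S₀ hS₀cond
  have hlb : ∀ T : Fin (k+1) → α, (n - 1) * k ≤ ∑ i, ham T (Vstr dollar v i) := by
    intro T
    rw [total_eq dollar v hv T]
    have : (n - 1) * k = 0 + ∑ _h : Fin k, (n - 1) := by simp [mul_comm]
    rw [this]
    gcongr with h
    · exact Nat.zero_le _
    · split_ifs <;> omega
  constructor
  · intro hm
    have hle := hm S₀
    rw [hS₀val] at hle
    rw [total_eq dollar v hv S] at hle
    have hsumlb : (n - 1) * k ≤ ∑ h : Fin k, (if ∃ i, S h.succ = v h i then n - 1 else n) := by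
      have : (n - 1) * k = ∑ _h : Fin k, (n - 1) := by simp [mul_comm]
      rw [this]
      gcongr with h
      split_ifs <;> omega
    have h0 : S 0 = dollar := by
      by_contra h
      rw [if_neg h] at hle
      omega
    refine ⟨h0, fun h => ?_⟩
    by_contra hne
    rw [if_pos h0] at hle
    have hstrict : (n - 1) * k <
        ∑ h : Fin k, (if ∃ i, S h.succ = v h i then n - 1 else n) := by
      have : (n - 1) * k = ∑ _h : Fin k, (n - 1) := by simp [mul_comm]
      rw [this]
      apply Finset.sum_lt_sum (fun j _ => by split_ifs <;> omega)
      exact ⟨h, Finset.mem_univ h, by rw [if_neg hne]; omega⟩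
    omega
  · intro hc S'
    rw [hmin S hc]
    exact hlb S'
end

section
/- Let strings be over alphabet Σ containing distinct symbols $ and ∘ and pairwise distinct vertex symbols v_{h,i} (h < k, i < n). Let S have length k+1 with S 0 = $ and S (h+1) = v_{h, i_h} for each h < k. Let e have two endpoints v_{h_s, j_s} and v_{h_t, j_t} with h_s ≠ h_t, and let ℰ be the string of length k+2 with ℰ 0 = $, ℰ (h+1) = ∘ for all h ∈ [1, k+1] except ℰ (h_s + 2) = v_{h_s, j_s} and ℰ (h_t + 2) = v_{h_t, j_t}. Then the minimum over the two possible alignments of S inside ℰ (starting at position 0 or position 1) of the Hamming distance between S and the corresponding length-(k+1) substring of ℰ equals k − 1 if j_s = i_{h_s} and j_t = i_{h_t}, and equals k otherwise. -/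
/-- The edge string `ℰ` for an edge with endpoints `v_{hs,js}` and `v_{ht,jt}`:
`ℰ 0 = $`, `ℰ (hs+2) = v hs js`, `ℰ (ht+2) = v ht jt` and `∘` everywhere else. -/
def Estr {k n : ℕ} {α : Type*} (dollar circ : α) (v : Fin k → Fin n → α)
    (hs ht : Fin k) (js jt : Fin n) : Fin (k+2) → α := fun q =>
  if q.val = 0 then dollar
  else if q.val = hs.val + 2 then v hs js
  else if q.val = ht.val + 2 then v ht jt
  else circ

/-- The length-`L` window of a length-`(L+1)` string at offset `p ∈ {0,1}`. -/
def window {L : ℕ} {α : Type*} (T : Fin (L+1) → α) (p : Fin 2) : Fin L → α :=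
  fun i => T ⟨p.val + i.val, by have := p.2; have := i.2; omega⟩

theorem stmt4 {k n : ℕ} {α : Type*} [DecidableEq α] (hk : 1 ≤ k)
    (dollar circ : α) (v : Fin k → Fin n → α)
    (hv : Function.Injective fun q : Fin k × Fin n => v q.1 q.2)
    (hvd : ∀ h i, v h i ≠ dollar) (hvc : ∀ h i, v h i ≠ circ) (hdc : dollar ≠ circ)
    (idx : Fin k → Fin n)
    (hs ht : Fin k) (js jt : Fin n) (hne : hs ≠ ht)
    (S : Fin (k+1) → α) (hS : S = Fin.cons dollar fun h => v h (idx h)) :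
    min (ham S (window (Estr dollar circ v hs ht js jt) 0))
        (ham S (window (Estr dollar circ v hs ht js jt) 1)) =
      if js = idx hs ∧ jt = idx ht then k - 1 else k := by
  subst hS
  set E := Estr dollar circ v hs ht js jt with hE
  set Sf : Fin (k+1) → α := Fin.cons dollar fun h => v h (idx h) with hSf
  -- injectivity helpers
  have vinj : ∀ (h h' : Fin k) (i i' : Fin n), v h i = v h' i' → h = h' ∧ i = i' := by
    intro h h' i i' heq
    have := hv (a₁ := (h, i)) (a₂ := (h', i')) heq
    exact ⟨congrArg Prod.fst this, congrArg Prod.snd this⟩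
  -- window value lemmas
  have EW0 : ∀ i : Fin (k+1), window E 0 i =
      if i.val = 0 then dollar
      else if i.val = hs.val + 2 then v hs js
      else if i.val = ht.val + 2 then v ht jt
      else circ := by
    intro i
    simp only [window, Estr, hE]
    norm_num
  have EW1 : ∀ i : Fin (k+1), window E 1 i =
      if i.val = hs.val + 1 then v hs js
      else if i.val = ht.val + 1 then v ht jt
      else circ := by
    intro i
    show (if 1 + i.val = 0 then dollar
      else if 1 + i.val = hs.val + 2 then v hs js
      else if 1 + i.val = ht.val + 2 then v ht jt
      else circ) = _
    have h0 : ¬ (1 + i.val = 0) := by omega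
    have h1 : (1 + i.val = hs.val + 2) ↔ (i.val = hs.val + 1) := by omega
    have h2 : (1 + i.val = ht.val + 2) ↔ (i.val = ht.val + 1) := by omega
    simp [h0, h1, h2]
  -- mismatch characterization at offset 0
  have H0 : ∀ i : Fin (k+1), (Sf i ≠ window E 0 i ↔ i ≠ 0) := by
    intro i
    induction i using Fin.cases with
    | zero =>
      rw [EW0]
      simp [hSf]
    | succ h =>
      rw [EW0]
      have hv1 : (h.succ : Fin (k+1)).val = h.val + 1 := rfl
      have hS1 : Sf h.succ = v h (idx h) := Fin.cons_succ _ _ _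
      rw [hS1, hv1]
      have hne0 : h.val + 1 ≠ 0 := by omega
      constructor
      · intro _; exact Fin.succ_ne_zero h
      · intro _
        split_ifs
        all_goals first
          | exact hvd h (idx h)
          | exact hvc h (idx h)
          | (intro heq
             have := congrArg Fin.val (vinj _ _ _ _ heq).1
             omega)
  -- match characterization at offset 1
  have H1 : ∀ i : Fin (k+1), (Sf i = window E 1 i ↔
      (i = hs.succ ∧ js = idx hs) ∨ (i = ht.succ ∧ jt = idx ht)) := by
    intro i
    induction i using Fin.cases with
    | zero =>
      rw [EW1]
      have hz : (0 : Fin (k+1)).val = 0 := rfl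
      rw [hz]
      have c1 : ¬ ((0:ℕ) = hs.val + 1) := by omega
      have c2 : ¬ ((0:ℕ) = ht.val + 1) := by omega
      simp only [c1, c2, if_false]
      constructor
      · intro heq
        have : dollar = circ := by simpa [hSf] using heq
        exact absurd this hdc
      · rintro (⟨h, _⟩ | ⟨h, _⟩) <;> exact absurd h.symm (Fin.succ_ne_zero _)
    | succ h =>
      rw [EW1]
      have hv1 : (h.succ : Fin (k+1)).val = h.val + 1 := rfl
      have hS1 : Sf h.succ = v h (idx h) := Fin.cons_succ _ _ _
      rw [hS1, hv1]
      have hsucc : ∀ h' : Fin k, (h.succ : Fin (k+1)) = h'.succ ↔ h = h' := by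
        intro h'; exact ⟨fun e => Fin.succ_injective _ e, fun e => by rw [e]⟩
      split_ifs with c1 c2
      · -- i.val = hs+1, so h = hs
        have hh : h = hs := Fin.val_injective (by omega)
        subst hh
        constructor
        · intro heq
          exact Or.inl ⟨rfl, ((vinj _ _ _ _ heq).2).symm⟩
        · rintro (⟨_, e⟩ | ⟨e, _⟩)
          · rw [e]
          · exact absurd ((hsucc ht).mp e) (by intro q; exact hne (by rw [q]))
      · have hh : h = ht := Fin.val_injective (by omega)
        subst hh
        constructor
        · intro heq
          exact Or.inr ⟨rfl, ((vinj _ _ _ _ heq).2).symm⟩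
        · rintro (⟨e, _⟩ | ⟨_, e⟩)
          · exact absurd ((hsucc hs).mp e) (fun q => hne q.symm)
          · rw [e]
      · constructor
        · intro heq; exact absurd heq (hvc h (idx h))
        · rintro (⟨e, _⟩ | ⟨e, _⟩)
          · have := congrArg Fin.val ((hsucc hs).mp e); omega
          · have := congrArg Fin.val ((hsucc ht).mp e); omega
  -- compute ham at offset 0
  have ham0 : ham Sf (window E 0) = k := by
    unfold ham
    have hfe : (Finset.univ.filter fun i => Sf i ≠ window E 0 i) =
        (Finset.univ.filter fun i : Fin (k+1) => i ≠ 0) := by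
      apply Finset.filter_congr
      intro i _
      simpa using H0 i
    rw [hfe, Finset.filter_ne']
    simp
  -- compute ham at offset 1 via match set
  have key : ham Sf (window E 1) +
      (Finset.univ.filter fun i => Sf i = window E 1 i).card = k + 1 := by
    unfold ham
    rw [add_comm]
    have := Finset.card_filter_add_card_filter_not
      (s := (Finset.univ : Finset (Fin (k+1)))) (p := fun i => Sf i = window E 1 i)
    simpa using this
  have hab : (hs.succ : Fin (k+1)) ≠ ht.succ := by
    intro e; exact hne (Fin.succ_injective _ e)
  rw [ham0]
  by_cases hjs : js = idx hs <;> by_cases hjt : jt = idx ht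
  · have hM : (Finset.univ.filter fun i => Sf i = window E 1 i) =
        {hs.succ, ht.succ} := by
      ext i
      simp [H1 i, hjs, hjt]
    rw [hM] at key
    rw [Finset.card_insert_of_notMem (by simp [hab]), Finset.card_singleton] at key
    simp only [hjs, hjt, and_self, if_true]
    omega
  · have hM : (Finset.univ.filter fun i => Sf i = window E 1 i) =
        {hs.succ} := by
      ext i
      simp [H1 i, hjs, hjt]
    rw [hM, Finset.card_singleton] at key
    simp only [hjs, hjt, and_false, if_false]
    omega
  · have hM : (Finset.univ.filter fun i => Sf i = window E 1 i) =
        {ht.succ} := by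
      ext i
      simp [H1 i, hjs, hjt]
    rw [hM, Finset.card_singleton] at key
    simp only [hjs, hjt, false_and, if_false]
    omega
  · have hM : (Finset.univ.filter fun i => Sf i = window E 1 i) = ∅ := by
      ext i
      simp [H1 i, hjs, hjt]
    rw [hM, Finset.card_empty] at key
    simp only [hjs, hjt, false_and, if_false]
    omega
end

section
/- With the setup of the edge-gadget lemma, if S is aligned at position 0 of ℰ (i.e., S i compared with ℰ i for i < k+1), then the Hamming distance is exactly k: the only matching position is position 0 where both equal $. -/
theorem stmt5 {k n : ℕ} {α : Type*} [DecidableEq α]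
    (dollar circ : α) (v : Fin k → Fin n → α)
    (hv : Function.Injective fun q : Fin k × Fin n => v q.1 q.2)
    (hvd : ∀ h i, v h i ≠ dollar) (hvc : ∀ h i, v h i ≠ circ) (hdc : dollar ≠ circ)
    (idx : Fin k → Fin n)
    (hs ht : Fin k) (js jt : Fin n) (hne : hs ≠ ht)
    (S : Fin (k+1) → α) (hS : S = Fin.cons dollar fun h => v h (idx h)) :
    ham S (window (Estr dollar circ v hs ht js jt) 0) = k ∧
    (∀ i : Fin (k+1), (S i = window (Estr dollar circ v hs ht js jt) 0 i ↔ i = 0)) := by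
  subst hS
  have key : ∀ i : Fin (k+1),
      ((Fin.cons dollar (fun h => v h (idx h)) : Fin (k+1) → α) i
        = window (Estr dollar circ v hs ht js jt) 0 i ↔ i = 0) := by
    intro i
    refine Fin.cases ?_ ?_ i
    · simp [window, Estr]
    · intro h
      simp only [Fin.cons_succ]
      constructor
      · intro heq
        exfalso
        simp only [window, Estr, Fin.val_succ, Fin.val_zero, Nat.zero_add] at heq
        split_ifs at heq
        all_goals first
          | exact hvd _ _ heq
          | exact hvc _ _ heq
          | (have hp : (h, idx h) = (hs, js) := hv heq
             have hv2 : h.val = hs.val := congrArg Fin.val (congrArg Prod.fst hp)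
             omega)
          | (have hp : (h, idx h) = (ht, jt) := hv heq
             have hv2 : h.val = ht.val := congrArg Fin.val (congrArg Prod.fst hp)
             omega)
      · intro h0
        exact absurd h0 (Fin.succ_ne_zero h)
  refine ⟨?_, key⟩
  unfold ham
  have : (Finset.univ.filter fun i : Fin (k+1) =>
      (Fin.cons dollar (fun h => v h (idx h)) : Fin (k+1) → α) i
        ≠ window (Estr dollar circ v hs ht js jt) 0 i)
      = Finset.univ.filter (· ≠ (0 : Fin (k+1))) := by
    ext i
    simp [key i]
  rw [this, Finset.filter_ne', Finset.card_erase_of_mem (Finset.mem_univ _)]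
  simp
end

section
/- Let G be a graph on vertex set partitioned into color classes V_1,...,V_k each of size n (no edge inside a class), with edge set e_1,...,e_m. Construct the Consensus Patterns instance consisting of N = m(k+2)+1 copies of each string 𝒱_i (i < n) and one copy of each edge string ℰ_j, with target length k+1, as in the reduction. Then the minimum over all strings S of length k+1 and all valid alignments of the total Hamming distance is at most N·(n−1)·k + m·k − k(k−1)/2 if and only if G contains a multicolored clique of size k (one vertex from each color class, pairwise adjacent). -/
/-! An optimal centre pays at least `k (n - 1)` against the vertex strings, with equality exactly
for the strings `$ v_{1,idx 1} … v_{k,idx k}`; as the vertex strings come with `N > m k` copies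
and the edge strings cost at most `m k` in total, an optimal centre has this form. Against it an
edge string costs `k` at offset `0`, and `k + 1` minus the number of its selected endpoints at
offset `1`, so the edges cost `m k` minus the number of edges with both endpoints selected.
Distinct such edges join distinct pairs of colours, so there are at most `k choose 2` of them,
with equality iff the selected vertices form a multicolored clique. -/

open Finset Function

section Hamming

variable {α : Type*} [DecidableEq α]

lemma ham_eq_sum {L : ℕ} (S T : Fin L → α) : ham S T = ∑ q, if S q ≠ T q then 1 else 0 :=
  card_filter _ _

lemma sum_ham_eq_sum_card_filter {ι : Type*} [Fintype ι] {L : ℕ} (S : Fin L → α)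
    (T : ι → Fin L → α) : ∑ i, ham S (T i) = ∑ q, #{i | S q ≠ T i q} := by
  simp only [ham_eq_sum, card_filter]
  exact sum_comm

end Hamming

section Window

variable {α : Type*} {L : ℕ} (T : Fin (L+1) → α)

lemma window_zero : window T 0 = Fin.init T := by
  funext i
  exact congrArg T (Fin.ext (Nat.zero_add i))

lemma window_one : window T 1 = Fin.tail T := by
  funext i
  exact congrArg T (Fin.ext (Nat.add_comm 1 i))

end Window

section Injective

variable {ι β : Type*} [Fintype ι] [DecidableEq β] {g : ι → β}

lemma card_filter_ne_apply (hg : Injective g) (i₀ : ι) :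
    #{i | g i₀ ≠ g i} = Fintype.card ι - 1 := by
  classical
  simp only [hg.ne_iff, filter_ne, mem_univ, card_erase_of_mem, card_univ]

lemma card_sub_one_le_card_filter_ne (hg : Injective g) (b : β) :
    Fintype.card ι - 1 ≤ #{i | b ≠ g i} := by
  by_cases hb : b ∈ Set.range g
  · obtain ⟨i₀, rfl⟩ := hb
    exact (card_filter_ne_apply hg i₀).ge
  · have : ∀ i, b ≠ g i := fun i h => hb ⟨i, h.symm⟩
    simp [this]

lemma mem_range_of_card_filter_ne_le [Nonempty ι] (b : β)
    (h : #{i | b ≠ g i} ≤ Fintype.card ι - 1) : b ∈ Set.range g := by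
  by_contra hb
  have : ∀ i, b ≠ g i := fun i h => hb ⟨i, h.symm⟩
  rw [filter_true_of_mem fun i _ => this i, card_univ] at h
  have := Fintype.card_pos (α := ι)
  omega

end Injective

section Vertex

variable {k n : ℕ} {α : Type*} [DecidableEq α] {dollar : α} {v : Fin k → Fin n → α}

variable (dollar v) in
def centerStr (idx : Fin k → Fin n) : Fin (k+1) → α := Fin.cons dollar fun h => v h (idx h)

lemma sum_ham_Vstr (S : Fin (k+1) → α) :
    ∑ i, ham S (Vstr dollar v i) = #{_i : Fin n | S 0 ≠ dollar} + ∑ h, #{i | S h.succ ≠ v h i} := by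
  simp [sum_ham_eq_sum_card_filter, Fin.sum_univ_succ, Vstr]

variable (hv : ∀ h, Injective (v h))
include hv

lemma sum_ham_centerStr_Vstr (idx : Fin k → Fin n) :
    ∑ i, ham (centerStr dollar v idx) (Vstr dollar v i) = k * (n - 1) := by
  simp [sum_ham_Vstr, centerStr, card_filter_ne_apply (hv _)]

lemma exists_eq_centerStr_of_sum_ham_Vstr_le (hn : 0 < n) (S : Fin (k+1) → α)
    (hS : ∑ i, ham S (Vstr dollar v i) ≤ k * (n - 1)) : ∃ idx, S = centerStr dollar v idx := by
  have : Nonempty (Fin n) := ⟨⟨0, hn⟩⟩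
  rw [sum_ham_Vstr] at hS
  have hcol : ∀ h ∈ univ, n - 1 ≤ #{i | S h.succ ≠ v h i} := fun h _ => by
    simpa using card_sub_one_le_card_filter_ne (hv h) (S h.succ)
  have hsum : ∑ _h : Fin k, (n - 1) ≤ ∑ h, #{i | S h.succ ≠ v h i} := sum_le_sum hcol
  have hsum' : ∑ _h : Fin k, (n - 1) = k * (n - 1) := by simp
  have hS0 : S 0 = dollar := by
    by_contra h0
    rw [filter_true_of_mem fun _ _ => h0, card_univ, Fintype.card_fin] at hS
    omega
  have hcol_eq := (sum_eq_sum_iff_of_le hcol).1 (by omega)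
  have hrange : ∀ h, S h.succ ∈ Set.range (v h) := fun h =>
    mem_range_of_card_filter_ne_le _ (by simpa using (hcol_eq h (mem_univ h)).ge)
  choose idx hidx using hrange
  refine ⟨idx, funext fun q => ?_⟩
  cases q using Fin.cases with
  | zero => exact hS0
  | succ h => exact (hidx h).symm

end Vertex

section Edge

variable {k n : ℕ} {α : Type*} {dollar circ : α} {v : Fin k → Fin n → α}
  (hs ht : Fin k) (js jt : Fin n)

lemma Estr_zero : Estr dollar circ v hs ht js jt 0 = dollar := rfl

lemma Estr_one : Estr dollar circ v hs ht js jt 1 = circ := by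
  simp [Estr]

lemma Estr_succ_castSucc (h : Fin k) :
    Estr dollar circ v hs ht js jt h.castSucc.succ =
      if h.val = hs.val + 1 then v hs js else if h.val = ht.val + 1 then v ht jt else circ := by
  simp [Estr]

lemma Estr_succ_succ (h : Fin k) :
    Estr dollar circ v hs ht js jt h.succ.succ =
      if h = hs then v hs js else if h = ht then v ht jt else circ := by
  simp [Estr, Fin.ext_iff]

lemma v_eq_v_iff (hv : Injective fun q : Fin k × Fin n => v q.1 q.2) {h h' : Fin k}
    {i i' : Fin n} : v h i = v h' i' ↔ h = h' ∧ i = i' :=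
  ⟨fun e => Prod.ext_iff.1 (@hv (h, i) (h', i') e), fun ⟨rfl, rfl⟩ => rfl⟩

variable [DecidableEq α] (hv : Injective fun q : Fin k × Fin n => v q.1 q.2)
  (hvc : ∀ h i, v h i ≠ circ) (idx : Fin k → Fin n)

include hv hvc in
lemma ham_centerStr_window_zero :
    ham (centerStr dollar v idx) (window (Estr dollar circ v hs ht js jt) 0) = k := by
  have hmis : ∀ h : Fin k, v h (idx h) ≠ Estr dollar circ v hs ht js jt h.castSucc.succ := by
    intro h
    rw [Estr_succ_castSucc]
    split_ifs with h1 h2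
    · exact fun e => by have := congrArg Fin.val ((v_eq_v_iff hv).1 e).1; omega
    · exact fun e => by have := congrArg Fin.val ((v_eq_v_iff hv).1 e).1; omega
    · exact hvc _ _
  rw [window_zero, ham_eq_sum, Fin.sum_univ_succ]
  simp [centerStr, Fin.init, Estr_zero, hmis]

include hv hvc in
lemma ham_centerStr_window_one_add (hdc : dollar ≠ circ) (hne : hs ≠ ht) :
    ham (centerStr dollar v idx) (window (Estr dollar circ v hs ht js jt) 1)
      + (if js = idx hs then 1 else 0) + (if jt = idx ht then 1 else 0) = k + 1 := by
  have hcol : ∀ h : Fin k,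
      (if v h (idx h) ≠ Estr dollar circ v hs ht js jt h.succ.succ then 1 else 0)
        + (if hs = h then if js = idx hs then 1 else 0 else 0)
        + (if ht = h then if jt = idx ht then 1 else 0 else 0) = 1 := by
    -- column `h` is either a mismatch or a selected endpoint of the edge, never both
    intro h
    rw [Estr_succ_succ]
    by_cases h1 : h = hs
    · subst h1
      by_cases e : js = idx h <;> simp [v_eq_v_iff hv, hne.symm, e, eq_comm]
    · by_cases h2 : h = ht
      · subst h2
        by_cases e : jt = idx h <;> simp [v_eq_v_iff hv, h1, Ne.symm h1, e, eq_comm]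
      · simp [h1, h2, Ne.symm h1, Ne.symm h2, hvc]
  have hsum := congrArg (fun f => ∑ h, f h) (funext hcol)
  simp only [sum_add_distrib, sum_ite_eq, mem_univ, if_true, sum_const, card_univ,
    Fintype.card_fin, smul_eq_mul, mul_one] at hsum
  rw [window_one, ham_eq_sum, Fin.sum_univ_succ]
  simp only [centerStr, Fin.tail, Fin.cons_zero, Fin.cons_succ, Fin.succ_zero_eq_one, Estr_one,
    if_pos hdc]
  omega

end Edge

section Edges

variable {k n m : ℕ} {α : Type*} [DecidableEq α] {dollar circ : α} {v : Fin k → Fin n → α}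
  (hs ht : Fin m → Fin k) (js jt : Fin m → Fin n) (idx : Fin k → Fin n)

def selectedEdges : Finset (Fin m) := {j | js j = idx (hs j) ∧ jt j = idx (ht j)}

variable (hv : Injective fun q : Fin k × Fin n => v q.1 q.2)
  (hvc : ∀ h i, v h i ≠ circ) (hdc : dollar ≠ circ) (hne : ∀ j, hs j ≠ ht j)
include hv hvc hdc hne

lemma le_sum_ham_window_add_card_selectedEdges (p : Fin m → Fin 2) :
    m * k ≤ ∑ j, ham (centerStr dollar v idx)
        (window (Estr dollar circ v (hs j) (ht j) (js j) (jt j)) (p j))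
      + #(selectedEdges hs ht js jt idx) := by
  have hedge : ∀ j ∈ univ, k ≤ ham (centerStr dollar v idx)
      (window (Estr dollar circ v (hs j) (ht j) (js j) (jt j)) (p j))
        + if js j = idx (hs j) ∧ jt j = idx (ht j) then 1 else 0 := by
    intro j _
    match p j with
    | 0 => rw [ham_centerStr_window_zero _ _ _ _ hv hvc]; omega
    | 1 =>
      have := ham_centerStr_window_one_add (hs j) (ht j) (js j) (jt j) hv hvc idx hdc (hne j)
      split_ifs at this ⊢ <;> omega
  rw [selectedEdges, card_filter, ← sum_add_distrib]
  simpa [mul_comm] using sum_le_sum hedge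

lemma sum_ham_window_add_card_selectedEdges :
    ∑ j, ham (centerStr dollar v idx) (window (Estr dollar circ v (hs j) (ht j) (js j) (jt j))
        (if js j = idx (hs j) ∧ jt j = idx (ht j) then 1 else 0))
      + #(selectedEdges hs ht js jt idx) = m * k := by
  have hedge : ∀ j ∈ univ, ham (centerStr dollar v idx) (window
      (Estr dollar circ v (hs j) (ht j) (js j) (jt j))
        (if js j = idx (hs j) ∧ jt j = idx (ht j) then 1 else 0))
      + (if js j = idx (hs j) ∧ jt j = idx (ht j) then 1 else 0) = k := by
    intro j _
    by_cases hj : js j = idx (hs j) ∧ jt j = idx (ht j)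
    · have := ham_centerStr_window_one_add (hs j) (ht j) (js j) (jt j) hv hvc idx hdc (hne j)
      simp only [hj, and_self, if_true] at this ⊢
      omega
    · simp only [hj, if_false, ham_centerStr_window_zero _ _ _ _ hv hvc, add_zero]
  rw [selectedEdges, card_filter, ← sum_add_distrib, sum_congr rfl hedge]
  simp [mul_comm]

end Edges

section Clique

variable {k n m : ℕ} {hs ht : Fin m → Fin k} {js jt : Fin m → Fin n} (idx : Fin k → Fin n)

lemma exists_selectedEdges_iff {h h' : Fin k} :
    (∃ j ∈ selectedEdges hs ht js jt idx, s(hs j, ht j) = s(h, h')) ↔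
      ∃ j, (hs j = h ∧ js j = idx h ∧ ht j = h' ∧ jt j = idx h') ∨
        (hs j = h' ∧ js j = idx h' ∧ ht j = h ∧ jt j = idx h) := by
  simp only [selectedEdges, mem_filter, mem_univ, true_and, Sym2.eq_iff]
  constructor
  · rintro ⟨j, ⟨hjs, hjt⟩, ⟨rfl, rfl⟩ | ⟨rfl, rfl⟩⟩
    exacts [⟨j, .inl ⟨rfl, hjs, rfl, hjt⟩⟩, ⟨j, .inr ⟨rfl, hjs, rfl, hjt⟩⟩]
  · rintro ⟨j, ⟨rfl, hjs, rfl, hjt⟩ | ⟨rfl, hjs, rfl, hjt⟩⟩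
    exacts [⟨j, ⟨hjs, hjt⟩, .inl ⟨rfl, rfl⟩⟩, ⟨j, ⟨hjs, hjt⟩, .inr ⟨rfl, rfl⟩⟩]

lemma choose_two_le_card_selectedEdges_iff (hne : ∀ j, hs j ≠ ht j)
    (hdistinct : ∀ j j' : Fin m,
      ({(hs j, js j), (ht j, jt j)} : Set (Fin k × Fin n)) =
        {(hs j', js j'), (ht j', jt j')} → j = j') :
    k.choose 2 ≤ #(selectedEdges hs ht js jt idx) ↔
      ∀ h h' : Fin k, h ≠ h' →
        ∃ j, (hs j = h ∧ js j = idx h ∧ ht j = h' ∧ jt j = idx h') ∨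
          (hs j = h' ∧ js j = idx h' ∧ ht j = h ∧ jt j = idx h) := by
  set M := selectedEdges hs ht js jt idx
  set E := (⊤ : SimpleGraph (Fin k)).edgeFinset
  let g : Fin m → Sym2 (Fin k) := fun j => s(hs j, ht j)
  have hgE : M.image g ⊆ E := by
    simp [subset_iff, E, g, hne]
  have hinj : Set.InjOn g M := by
    intro j hj j' hj' hg
    simp only [M, selectedEdges, coe_filter, mem_univ, true_and, Set.mem_ofPred_eq] at hj hj'
    apply hdistinct
    rw [hj.1, hj.2, hj'.1, hj'.2, Set.pair_eq_pair_iff]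
    rcases Sym2.eq_iff.1 hg with ⟨e1, e2⟩ | ⟨e1, e2⟩
    · exact .inl ⟨by rw [e1], by rw [e2]⟩
    · exact .inr ⟨by rw [e1], by rw [e2]⟩
  have hcard : k.choose 2 ≤ #M ↔ E ⊆ M.image g := by
    have hE : #E = k.choose 2 := by
      rw [SimpleGraph.card_edgeFinset_top_eq_card_choose_two, Fintype.card_fin]
    rw [← card_image_of_injOn hinj, ← hE]
    exact ⟨fun h => (eq_of_subset_of_card_le hgE h).ge, card_le_card⟩
  rw [hcard]
  simp_rw [← exists_selectedEdges_iff]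
  constructor
  · intro hsub h h' hhh'
    have hE : s(h, h') ∈ E := by simpa [E] using hhh'
    simpa [g] using hsub hE
  · intro hcl e he
    induction e using Sym2.ind with
    | h h h' => simpa [g] using hcl h h' (by simpa [E] using he)

end Clique

theorem stmt8_general {k n m : ℕ} {α : Type*} [DecidableEq α]
    (hn : 2 ≤ n)
    (dollar circ : α) (v : Fin k → Fin n → α)
    (hv : Function.Injective fun q : Fin k × Fin n => v q.1 q.2)
    (hvc : ∀ h i, v h i ≠ circ) (hdc : dollar ≠ circ)
    -- the `m` edges: edge `j` joins `v (hs j) (js j)` and `v (ht j) (jt j)`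
    (hs ht : Fin m → Fin k) (js jt : Fin m → Fin n)
    (hne : ∀ j, hs j ≠ ht j)
    (hdistinct : ∀ j j' : Fin m,
      ({(hs j, js j), (ht j, jt j)} : Set (Fin k × Fin n)) =
        {(hs j', js j'), (ht j', jt j')} → j = j') :
    ((∃ (S : Fin (k+1) → α) (p : Fin m → Fin 2),
        (m * (k+2) + 1) * (∑ i, ham S (Vstr dollar v i)) +
          ∑ j, ham S (window (Estr dollar circ v (hs j) (ht j) (js j) (jt j)) (p j))
        ≤ (m * (k+2) + 1) * (n - 1) * k + m * k - k * (k - 1) / 2) ↔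
      ∃ idx : Fin k → Fin n, ∀ h h' : Fin k, h ≠ h' →
        ∃ j : Fin m,
          (hs j = h ∧ js j = idx h ∧ ht j = h' ∧ jt j = idx h') ∨
          (hs j = h' ∧ js j = idx h' ∧ ht j = h ∧ jt j = idx h)) := by
  have hcol : ∀ h, Injective (v h) := fun h i i' e => ((v_eq_v_iff hv).1 e).2
  set N := m * (k+2) + 1
  have hN : m * k < N := Nat.lt_succ_of_le (Nat.mul_le_mul_left m (Nat.le_add_right k 2))
  rw [← Nat.choose_two_right, mul_assoc, mul_comm (n - 1)]
  constructor
  · rintro ⟨S, p, hcost⟩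
    have hS : ∑ i, ham S (Vstr dollar v i) ≤ k * (n - 1) := by
      by_contra! hgt
      have := Nat.mul_le_mul_left N hgt
      rw [Nat.mul_succ] at this
      omega
    obtain ⟨idx, rfl⟩ := exists_eq_centerStr_of_sum_ham_Vstr_le hcol (by omega) S hS
    refine ⟨idx, (choose_two_le_card_selectedEdges_iff idx hne hdistinct).1 ?_⟩
    rcases Nat.eq_zero_or_pos k with rfl | hk
    · simp
    -- the bound in `hcost` is a truncated subtraction; `hpos` keeps it from collapsing to `0`
    have hpos : 0 < N * (k * (n - 1)) := Nat.mul_pos (by omega) (Nat.mul_pos hk (by omega))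
    have hedges := le_sum_ham_window_add_card_selectedEdges hs ht js jt idx hv hvc hdc hne p
    rw [sum_ham_centerStr_Vstr hcol] at hcost
    omega
  · rintro ⟨idx, hclique⟩
    refine ⟨centerStr dollar v idx,
      fun j => if js j = idx (hs j) ∧ jt j = idx (ht j) then 1 else 0, ?_⟩
    have hedges := sum_ham_window_add_card_selectedEdges hs ht js jt idx hv hvc hdc hne
    have hcard := (choose_two_le_card_selectedEdges_iff idx hne hdistinct).2 hclique
    rw [sum_ham_centerStr_Vstr hcol]
    beta_reduce
    omega

theorem stmt8 {k n m : ℕ} {α : Type*} [DecidableEq α]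
    (hk : 2 ≤ k) (hn : 2 ≤ n) (hm : 1 ≤ m)
    (dollar circ : α) (v : Fin k → Fin n → α)
    (hv : Function.Injective fun q : Fin k × Fin n => v q.1 q.2)
    (hvd : ∀ h i, v h i ≠ dollar) (hvc : ∀ h i, v h i ≠ circ) (hdc : dollar ≠ circ)
    -- the `m` edges: edge `j` joins `v (hs j) (js j)` and `v (ht j) (jt j)`
    (hs ht : Fin m → Fin k) (js jt : Fin m → Fin n)
    (hne : ∀ j, hs j ≠ ht j)
    (hdistinct : ∀ j j' : Fin m,
      ({(hs j, js j), (ht j, jt j)} : Set (Fin k × Fin n)) =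
        {(hs j', js j'), (ht j', jt j')} → j = j') :
    ((∃ (S : Fin (k+1) → α) (p : Fin m → Fin 2),
        (m * (k+2) + 1) * (∑ i, ham S (Vstr dollar v i)) +
          ∑ j, ham S (window (Estr dollar circ v (hs j) (ht j) (js j) (jt j)) (p j))
        ≤ (m * (k+2) + 1) * (n - 1) * k + m * k - k * (k - 1) / 2) ↔
      ∃ idx : Fin k → Fin n, ∀ h h' : Fin k, h ≠ h' →
        ∃ j : Fin m,
          (hs j = h ∧ js j = idx h ∧ ht j = h' ∧ jt j = idx h') ∨
          (hs j = h' ∧ js j = idx h' ∧ ht j = h ∧ jt j = idx h)) :=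
  stmt8_general hn dollar circ v hv hvc hdc hs ht js jt hne hdistinct
end

section
/- Any string S of length k+1 whose total Hamming distance to the multiset of N copies of each 𝒱_i (i < n) plus at most m(k+2) additional nonnegative cost is minimal must satisfy ∑_{i<n} Ham(S, 𝒱_i) = (n−1)k, i.e., S 0 = $ and each S (h+1) is some vertex symbol of color h. -/
section
variable {k n : ℕ} {α : Type*} [DecidableEq α]

lemma ham_Vstr (dollar : α) (v : Fin k → Fin n → α) (S : Fin (k+1) → α) (i : Fin n) :
    ham S (Vstr dollar v i) =
      (if S 0 = dollar then 0 else 1) + ∑ h : Fin k, (if S h.succ = v h i then 0 else 1) := by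
  unfold ham Vstr
  rw [Finset.card_filter, Fin.sum_univ_succ]
  simp [ite_not]

lemma sum_ham (dollar : α) (v : Fin k → Fin n → α) (S : Fin (k+1) → α) :
    ∑ i, ham S (Vstr dollar v i) =
      (if S 0 = dollar then 0 else 1) * n +
      ∑ h : Fin k, (n - (Finset.univ.filter fun i : Fin n => S h.succ = v h i).card) := by
  simp_rw [ham_Vstr]
  rw [Finset.sum_add_distrib, Finset.sum_const, Finset.sum_comm]
  congr 1
  · simp [mul_comm]
  · apply Finset.sum_congr rfl; intro h _
    have h1 := Finset.card_filter_add_card_filter_not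
      (s := (Finset.univ : Finset (Fin n))) (p := fun i => S h.succ = v h i)
    have h2 : ∑ i : Fin n, (if S h.succ = v h i then 0 else 1)
        = (Finset.univ.filter fun i : Fin n => ¬ (S h.succ = v h i)).card := by
      rw [Finset.card_filter]
      exact Finset.sum_congr rfl fun i _ => by by_cases hh : S h.succ = v h i <;> simp [hh]
    simp only [Finset.card_univ, Fintype.card_fin] at h1
    omega

lemma card_le_one (v : Fin k → Fin n → α)
    (hv : Function.Injective fun q : Fin k × Fin n => v q.1 q.2)
    (a : α) (h : Fin k) :
    (Finset.univ.filter fun i : Fin n => a = v h i).card ≤ 1 := by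
  apply Finset.card_le_one.2
  intro i hi j hj
  simp only [Finset.mem_filter] at hi hj
  have := hv (a₁ := (h, i)) (a₂ := (h, j)) (by simp [← hi.2, ← hj.2])
  exact (Prod.mk.injEq _ _ _ _ ▸ this).2

end

theorem stmt10 {k n m : ℕ} {α : Type*} [DecidableEq α] (hn : 1 ≤ n)
    (dollar : α) (v : Fin k → Fin n → α)
    (hv : Function.Injective fun q : Fin k × Fin n => v q.1 q.2)
    (hvd : ∀ h i, v h i ≠ dollar)
    -- `b` is the additional nonnegative cost, bounded by `m * (k+2)`
    (b : (Fin (k+1) → α) → ℕ) (hb : ∀ S, b S ≤ m * (k+2))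
    (S : Fin (k+1) → α)
    (hmin : ∀ S' : Fin (k+1) → α,
      (m * (k+2) + 1) * (∑ i, ham S (Vstr dollar v i)) + b S ≤
      (m * (k+2) + 1) * (∑ i, ham S' (Vstr dollar v i)) + b S') :
    ∑ i, ham S (Vstr dollar v i) = (n - 1) * k ∧
    S 0 = dollar ∧ ∀ h : Fin k, ∃ i : Fin n, S h.succ = v h i := by
  set A := ∑ i, ham S (Vstr dollar v i) with hA
  -- lower bound machinery
  set c : Fin k → ℕ := fun h => (Finset.univ.filter fun i : Fin n => S h.succ = v h i).card with hc
  have hcle : ∀ h, c h ≤ 1 := fun h => card_le_one v hv _ h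
  have hform : A = (if S 0 = dollar then 0 else 1) * n + ∑ h : Fin k, (n - c h) :=
    sum_ham dollar v S
  have hterm : ∀ h : Fin k, n - 1 ≤ n - c h := fun h => by have := hcle h; omega
  have hlow : (n - 1) * k ≤ ∑ h : Fin k, (n - c h) := by
    calc (n - 1) * k = ∑ _h : Fin k, (n - 1) := by simp [mul_comm]
    _ ≤ _ := Finset.sum_le_sum fun h _ => hterm h
  -- upper bound via S' = Vstr dollar v i₀
  have i0 : Fin n := ⟨0, hn⟩
  have hS' : ∑ i, ham (Vstr dollar v i0) (Vstr dollar v i) = (n - 1) * k := by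
    rw [sum_ham]
    have h0 : Vstr dollar v i0 0 = dollar := rfl
    have hsucc : ∀ h : Fin k, Vstr dollar v i0 h.succ = v h i0 := fun h => rfl
    simp only [h0, if_pos rfl, zero_mul, zero_add, hsucc]
    have : ∀ h : Fin k,
        (Finset.univ.filter fun i : Fin n => v h i0 = v h i) = {i0} := by
      intro h
      ext i
      simp only [Finset.mem_filter, Finset.mem_univ, true_and, Finset.mem_singleton]
      constructor
      · intro he
        have := hv (a₁ := (h, i0)) (a₂ := (h, i)) (by simpa using he)
        exact ((Prod.mk.injEq _ _ _ _ ▸ this).2).symm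
      · rintro rfl; rfl
    simp [this, mul_comm]
  have hmin0 := hmin (Vstr dollar v i0)
  rw [hS'] at hmin0
  have hbS := hb S
  have hbS' := hb (Vstr dollar v i0)
  set M := m * (k + 2) with hM
  have hAle : A ≤ (n - 1) * k := by nlinarith [hmin0, hbS, hbS']
  -- conclude
  have he : (if S 0 = dollar then 0 else 1) = 0 := by
    by_contra hne
    have : (if S 0 = dollar then 0 else 1) = 1 := by split at hne <;> simp_all
    rw [this, one_mul] at hform
    omega
  have hS0 : S 0 = dollar := by by_contra hx; simp [hx] at he
  rw [he, zero_mul, zero_add] at hform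
  have hAeq : A = (n - 1) * k := le_antisymm hAle (hform ▸ hlow)
  refine ⟨hAeq, hS0, fun h => ?_⟩
  -- each term must equal n - 1, forcing c h = 1
  have hsum : ∑ h : Fin k, (n - c h) = ∑ _h : Fin k, (n - 1) := by
    rw [← hform, hAeq]; simp [mul_comm]
  have heach : n - c h = n - 1 := by
    by_contra hne
    have hlt : n - 1 < n - c h := lt_of_le_of_ne (hterm h) (Ne.symm hne)
    have : ∑ _h : Fin k, (n - 1) < ∑ h : Fin k, (n - c h) :=
      Finset.sum_lt_sum (fun j _ => hterm j) ⟨h, Finset.mem_univ h, hlt⟩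
    omega
  have hc1 : c h = 1 := by have := hcle h; omega
  have : (Finset.univ.filter fun i : Fin n => S h.succ = v h i).Nonempty :=
    Finset.card_pos.1 (by change 0 < c h; omega)
  obtain ⟨i, hi⟩ := this
  exact ⟨i, (Finset.mem_filter.1 hi).2⟩
end

section
/- In the edge-gadget alignment at offset 1 (comparing S i with ℰ (i+1) for i < k+1), the number of matching positions is exactly [i_{h_s} = j_s] + [i_{h_t} = j_t] (0, 1, or 2), hence the Hamming distance is k+1 minus that count. -/
theorem stmt15 {k n : ℕ} {α : Type*} [DecidableEq α]
    (dollar circ : α) (v : Fin k → Fin n → α)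
    (hv : Function.Injective fun q : Fin k × Fin n => v q.1 q.2)
    (hvd : ∀ h i, v h i ≠ dollar) (hvc : ∀ h i, v h i ≠ circ) (hdc : dollar ≠ circ)
    (idx : Fin k → Fin n)
    (hs ht : Fin k) (js jt : Fin n) (hne : hs ≠ ht)
    (S : Fin (k+1) → α) (hS : S = Fin.cons dollar fun h => v h (idx h)) :
    (Finset.univ.filter fun i : Fin (k+1) =>
        S i = window (Estr dollar circ v hs ht js jt) 1 i).card =
      (if idx hs = js then 1 else 0) + (if idx ht = jt then 1 else 0) ∧
    ham S (window (Estr dollar circ v hs ht js jt) 1) =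
      (k + 1) - ((if idx hs = js then 1 else 0) + (if idx ht = jt then 1 else 0)) := by
  have key : ∀ i : Fin (k+1),
      (S i = window (Estr dollar circ v hs ht js jt) 1 i) ↔
      ((i = hs.succ ∧ idx hs = js) ∨ (i = ht.succ ∧ idx ht = jt)) := by
    intro i
    induction i using Fin.cases with
    | zero =>
      subst hS
      simp only [Fin.cons_zero, window, Estr]
      norm_num
      constructor
      · intro h
        exfalso
        have h2 : ¬ (1 = hs.val + 2) := by omega
        have h3 : ¬ (1 = ht.val + 2) := by omega
        exact hdc h
      · rintro (⟨h, -⟩ | ⟨h, -⟩) <;> exact absurd h (by simp [Fin.ext_iff])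
    | succ h =>
      subst hS
      simp only [Fin.cons_succ, window, Estr]
      have hval : (1 : Fin 2).val + (h.succ : Fin (k+1)).val = h.val + 2 := by
        simp [Fin.val_succ]; omega
      simp only [hval]
      have h0 : ¬ (h.val + 2 = 0) := by omega
      simp only [h0, if_false]
      by_cases hhs : h = hs
      · subst hhs
        rw [if_pos rfl]
        constructor
        · intro he
          left
          refine ⟨rfl, ?_⟩
          have : (fun q : Fin k × Fin n => v q.1 q.2) (h, idx h) =
              (fun q : Fin k × Fin n => v q.1 q.2) (h, js) := he
          exact (Prod.ext_iff.mp (hv this)).2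
        · rintro (⟨-, he⟩ | ⟨he, -⟩)
          · rw [he]
          · exact absurd (Fin.succ_injective _ he) hne
      · have hns : ¬ (h.val + 2 = hs.val + 2) := by
          simp [Fin.ext_iff] at hhs; omega
        simp only [hns, if_false]
        by_cases hht : h = ht
        · subst hht
          rw [if_pos rfl]
          constructor
          · intro he
            right
            refine ⟨rfl, ?_⟩
            have : (fun q : Fin k × Fin n => v q.1 q.2) (h, idx h) =
                (fun q : Fin k × Fin n => v q.1 q.2) (h, jt) := he
            exact (Prod.ext_iff.mp (hv this)).2
          · rintro (⟨he, -⟩ | ⟨-, he⟩)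
            · exact absurd (Fin.succ_injective _ he) hhs
            · rw [he]
        · have hnt : ¬ (h.val + 2 = ht.val + 2) := by
            simp [Fin.ext_iff] at hht; omega
          simp only [hnt, if_false]
          constructor
          · intro he; exact absurd he (hvc _ _)
          · rintro (⟨he, -⟩ | ⟨he, -⟩)
            · exact absurd (Fin.succ_injective _ he) hhs
            · exact absurd (Fin.succ_injective _ he) hht
  have hfilter : (Finset.univ.filter fun i : Fin (k+1) =>
      S i = window (Estr dollar circ v hs ht js jt) 1 i) =
      (Finset.univ.filter fun i : Fin (k+1) =>
        (i = hs.succ ∧ idx hs = js) ∨ (i = ht.succ ∧ idx ht = jt)) := by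
    apply Finset.filter_congr
    intro i _
    simpa using key i
  have hsne : (hs.succ : Fin (k+1)) ≠ ht.succ := fun he =>
    hne (Fin.succ_injective _ he)
  have hcard : (Finset.univ.filter fun i : Fin (k+1) =>
      S i = window (Estr dollar circ v hs ht js jt) 1 i).card =
      (if idx hs = js then 1 else 0) + (if idx ht = jt then 1 else 0) := by
    rw [hfilter]
    by_cases c1 : idx hs = js <;> by_cases c2 : idx ht = jt
    · simp only [c1, c2, and_true, Finset.filter_or, Finset.filter_eq', if_pos trivial,
        Finset.mem_univ, if_true]
      rw [Finset.card_union_of_disjoint (Finset.disjoint_singleton.mpr hsne)]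
      simp
    all_goals simp [c1, c2, Finset.filter_eq']
  refine ⟨hcard, ?_⟩
  have hcompl : (Finset.univ.filter fun i : Fin (k+1) =>
      S i ≠ window (Estr dollar circ v hs ht js jt) 1 i) =
      (Finset.univ.filter fun i : Fin (k+1) =>
        S i = window (Estr dollar circ v hs ht js jt) 1 i)ᶜ := by
    rw [Finset.compl_filter]
  rw [ham, hcompl, Finset.card_compl, hcard]
  simp
end
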